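/- Let f : [a,b] → ℝ be a convex function on [a,b], and let x ∈ (a,b) be a point at which f is differentiable. Then (b−a)·((a+b)/2 − x)·f′(x) ≤ (x−a)·f(a) + (b−x)·f(b) − ∫_a^b f(t) dt. -/

import Mathlib

/-!
Split `∫_a^b f` at `x`. On each of `[a, x]` and `[x, b]` the convex function lies below its chord,
so its integral is at most the trapezoid value (the right half of Hermite–Hadamard). This bounds
`(x - a) f(a) + (b - x) f(b) - ∫_a^b f` from below by
`((x - a)(f(a) - f(x)) + (b - x)(f(b) - f(x))) / 2`, and the tangent line at `x`, which lies
below `f` at `a` and at `b`, turns this into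
`f′(x) ((b - x)² - (x - a)²) / 2 = (b - a)((a + b)/2 - x) f′(x)`.
-/

open MeasureTheory Set intervalIntegral

namespace ConvexOn

variable {f : ℝ → ℝ} {a b : ℝ}

theorem bddBelow_image_Icc (hf : ConvexOn ℝ (Icc a b) f) : BddBelow (f '' Icc a b) := by
  refine ⟨2 * f ((a + b) / 2) - max (f a) (f b), ?_⟩
  rintro _ ⟨t, ht, rfl⟩
  have hreflect : a + b - t ∈ Icc a b := ⟨by linarith [ht.2], by linarith [ht.1]⟩
  have hmid := hf.2 ht hreflect (by norm_num : (0 : ℝ) ≤ 1 / 2)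
    (by norm_num : (0 : ℝ) ≤ 1 / 2) (by norm_num)
  simp only [smul_eq_mul, show 1 / 2 * t + 1 / 2 * (a + b - t) = (a + b) / 2 by ring] at hmid
  have hmax : f (a + b - t) ≤ max (f a) (f b) :=
    hf.le_max_of_mem_Icc (left_mem_Icc.2 (ht.1.trans ht.2))
      (right_mem_Icc.2 (ht.1.trans ht.2)) hreflect
  linarith

theorem bddAbove_image_Icc (hf : ConvexOn ℝ (Icc a b) f) : BddAbove (f '' Icc a b) := by
  refine ⟨max (f a) (f b), ?_⟩
  rintro _ ⟨t, ht, rfl⟩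
  exact hf.le_max_of_mem_Icc (left_mem_Icc.2 (ht.1.trans ht.2))
    (right_mem_Icc.2 (ht.1.trans ht.2)) ht

theorem intervalIntegrable (hf : ConvexOn ℝ (Icc a b) f) (hab : a ≤ b) :
    IntervalIntegrable f volume a b := by
  obtain ⟨C, hC⟩ := (isBounded_iff_bddBelow_bddAbove.2
    ⟨hf.bddBelow_image_Icc, hf.bddAbove_image_Icc⟩).exists_norm_le
  have hcont : ContinuousOn f (Ioo a b) := by simpa using hf.continuousOn_interior
  rw [intervalIntegrable_iff_integrableOn_Ioo_of_le hab]
  refine IntegrableOn.of_bound measure_Ioo_lt_top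
    (hcont.aestronglyMeasurable measurableSet_Ioo) C ?_
  exact ae_restrict_of_forall_mem measurableSet_Ioo fun t ht ↦
    hC _ (mem_image_of_mem f (Ioo_subset_Icc_self ht))

theorem mul_le_chord (hf : ConvexOn ℝ (Icc a b) f) {t : ℝ} (ht : t ∈ Icc a b) :
    (b - a) * f t ≤ (b - t) * f a + (t - a) * f b := by
  rcases (ht.1.trans ht.2).eq_or_lt with rfl | hab
  · obtain rfl : t = a := le_antisymm ht.2 ht.1
    simp
  have hba : 0 < b - a := sub_pos.2 hab
  have hconv := hf.2 (left_mem_Icc.2 hab.le) (right_mem_Icc.2 hab.le)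
    (div_nonneg (sub_nonneg.2 ht.2) hba.le) (div_nonneg (sub_nonneg.2 ht.1) hba.le)
    (by field_simp; ring)
  have hcomb : (b - t) / (b - a) * a + (t - a) / (b - a) * b = t := by
    field_simp; ring
  simp only [smul_eq_mul, hcomb] at hconv
  calc (b - a) * f t ≤ (b - a) * ((b - t) / (b - a) * f a + (t - a) / (b - a) * f b) :=
        mul_le_mul_of_nonneg_left hconv hba.le
    _ = (b - t) * f a + (t - a) * f b := by field_simp

theorem integral_le_trapezoid (hf : ConvexOn ℝ (Icc a b) f) (hab : a ≤ b) :
    ∫ t in a..b, f t ≤ (b - a) * (f a + f b) / 2 := by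
  rcases hab.eq_or_lt with rfl | hab
  · simp
  have hchord : ∫ t in a..b, (b - a) * f t ≤ ∫ t in a..b, ((b - t) * f a + (t - a) * f b) :=
    integral_mono_on hab.le ((hf.intervalIntegrable hab.le).const_mul _)
      (by apply Continuous.intervalIntegrable; fun_prop) fun t ht ↦ hf.mul_le_chord ht
  have hlinear :
      ∫ t in a..b, ((b - t) * f a + (t - a) * f b) = (b - a) ^ 2 * (f a + f b) / 2 := by
    rw [intervalIntegral.integral_add (by apply Continuous.intervalIntegrable; fun_prop)
      (by apply Continuous.intervalIntegrable; fun_prop)]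
    simp only [intervalIntegral.integral_mul_const, integral_comp_sub_left (fun t ↦ t),
      integral_comp_sub_right (fun t ↦ t), integral_id]
    ring
  rw [intervalIntegral.integral_const_mul, hlinear] at hchord
  refine le_of_mul_le_mul_left ?_ (sub_pos.2 hab)
  linarith

theorem add_mul_sub_le_of_hasDerivAt {s : Set ℝ} (hf : ConvexOn ℝ s f) {x y f' : ℝ}
    (hx : x ∈ s) (hy : y ∈ s) (hfd : HasDerivAt f f' x) :
    f x + f' * (y - x) ≤ f y := by
  rcases lt_trichotomy y x with hyx | rfl | hxy
  · have hslope := hf.slope_le_of_hasDerivAt hy hx hyx hfd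
    rw [slope_def_field, div_le_iff₀ (sub_pos.2 hyx)] at hslope
    linarith
  · simp
  · have hslope := hf.le_slope_of_hasDerivAt hx hy hxy hfd
    rw [slope_def_field, le_div_iff₀ (sub_pos.2 hxy)] at hslope
    linarith

end ConvexOn

/-- **Lower bound at a point of differentiability** (Corollary 2): for a convex
`f : [a,b] → ℝ` differentiable at `x ∈ (a,b)` with derivative `fd`,
`(b−a)((a+b)/2 − x) f′(x) ≤ (x−a)f(a) + (b−x)f(b) − ∫_a^b f`. -/
theorem trapezoid_convex_lower_bound_differentiable
    (a b : ℝ) (hab : a < b) (f : ℝ → ℝ)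
    (hf : ConvexOn ℝ (Set.Icc a b) f)
    (x : ℝ) (hx : x ∈ Set.Ioo a b) (fd : ℝ)
    (hfd : HasDerivAt f fd x) :
    (b - a) * ((a + b) / 2 - x) * fd ≤
      (x - a) * f a + (b - x) * f b - ∫ t in a..b, f t := by
  obtain ⟨hax, hxb⟩ := hx
  have hxI : x ∈ Icc a b := ⟨hax.le, hxb.le⟩
  have hfl : ConvexOn ℝ (Icc a x) f := hf.subset (Icc_subset_Icc_right hxb.le) (convex_Icc a x)
  have hfr : ConvexOn ℝ (Icc x b) f := hf.subset (Icc_subset_Icc_left hax.le) (convex_Icc x b)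
  have hsplit := integral_add_adjacent_intervals (hfl.intervalIntegrable hax.le)
    (hfr.intervalIntegrable hxb.le)
  have hl := hfl.integral_le_trapezoid hax.le
  have hr := hfr.integral_le_trapezoid hxb.le
  have hta := hf.add_mul_sub_le_of_hasDerivAt hxI (left_mem_Icc.2 hab.le) hfd
  have htb := hf.add_mul_sub_le_of_hasDerivAt hxI (right_mem_Icc.2 hab.le) hfd
  linarith [mul_le_mul_of_nonneg_left hta (sub_nonneg.2 hax.le),
    mul_le_mul_of_nonneg_left htb (sub_nonneg.2 hxb.le)]
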